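/- Let χ and χ' be integers with χ ≤ −2 and χ' ≤ 2χ, and write −χ' = a·(−χ) + b with integers a, b satisfying 0 ≤ b < −χ (so a ≥ 2). Then the least natural number k for which there exists an integer d ≥ 1 with d(χ−k) ≤ χ'−k and dχ ≥ χ'+k (equivalently, (χ'−k)/(χ−k) ≤ d ≤ (χ'+k)/χ as rational numbers) is k = ⌈b/(a−1)⌉. -/

import Mathlib

/-! With `χ' = aχ - b`, the two conditions on `d` read `(a - d)(-χ) + b ≤ (d - 1)k` and
`(d - a)(-χ) + k ≤ b`. Since `0 ≤ b < -χ`, the second forces `d ≤ a`, and then the first gives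
`b ≤ (a - 1)k`. Conversely `d = a` is admissible exactly when `b ≤ (a - 1)k` and `k ≤ b`, and the
least `k` with `b ≤ (a - 1)k` is `⌈b / (a - 1)⌉ ≤ b`. -/

theorem Int.ceil_intCast_div_le_iff {b q : ℤ} (hq : 0 < q) (k : ℤ) :
    ⌈(b : ℚ) / q⌉ ≤ k ↔ b ≤ q * k := by
  rw [Int.ceil_le, div_le_iff₀ (by exact_mod_cast hq), mul_comm]
  exact_mod_cast Iff.rfl

theorem Int.isLeast_toNat_ceil_intCast_div {b q : ℤ} (hq : 0 < q) :
    IsLeast {k : ℕ | b ≤ q * k} ⌈(b : ℚ) / q⌉.toNat := by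
  have hIci : {k : ℕ | b ≤ q * k} = Set.Ici ⌈(b : ℚ) / q⌉.toNat := by
    ext k
    rw [Set.mem_Ici, Int.toNat_le, Int.ceil_intCast_div_le_iff hq, Set.mem_ofPred_eq]
  exact hIci ▸ isLeast_Ici

theorem Int.toNat_ceil_intCast_div_le {b q : ℤ} (hb : 0 ≤ b) (hq : 1 ≤ q) :
    (⌈(b : ℚ) / q⌉.toNat : ℤ) ≤ b := by
  have hceil : ⌈(b : ℚ) / q⌉ ≤ b := (Int.ceil_intCast_div_le_iff (by omega) b).2 (by nlinarith)
  omega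

def admissibleShifts (χ χ' : ℤ) : Set ℕ :=
  {k | ∃ d : ℤ, 1 ≤ d ∧ d * (χ - k) ≤ χ' - k ∧ χ' + k ≤ d * χ}

section

variable {χ χ' a b : ℤ}

theorem two_le_of_le_two_mul (hχ' : χ' ≤ 2 * χ) (hab : -χ' = a * (-χ) + b) (hb0 : 0 ≤ b)
    (hb1 : b < -χ) : 2 ≤ a := by
  nlinarith

theorem mem_admissibleShifts_of_le {k : ℕ} (hab : -χ' = a * (-χ) + b) (ha : 1 ≤ a)
    (hk : b ≤ (a - 1) * k) (hkb : k ≤ b) : k ∈ admissibleShifts χ χ' :=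
  ⟨a, ha, by linarith, by linarith⟩

theorem le_mul_of_mem_admissibleShifts {k : ℕ} (hab : -χ' = a * (-χ) + b) (hb0 : 0 ≤ b)
    (hb1 : b < -χ) (hk : k ∈ admissibleShifts χ χ') : b ≤ (a - 1) * k := by
  obtain ⟨d, hd1, hlow, hup⟩ := hk
  have hda : d ≤ a := by nlinarith
  calc b ≤ (a - d) * (-χ) + b := by nlinarith
    _ ≤ (d - 1) * k := by linarith
    _ ≤ (a - 1) * k := by gcongr

end

theorem least_k_eq_ceil_general (χ χ' a b : ℤ) (hχ' : χ' ≤ 2 * χ)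
    (hab : -χ' = a * (-χ) + b) (hb0 : 0 ≤ b) (hb1 : b < -χ) :
    IsLeast {k : ℕ | ∃ d : ℤ, 1 ≤ d ∧ d * (χ - (k : ℤ)) ≤ χ' - (k : ℤ) ∧ χ' + (k : ℤ) ≤ d * χ}
      (⌈(b : ℚ) / ((a : ℚ) - 1)⌉.toNat) := by
  change IsLeast (admissibleShifts χ χ') _
  have ha := two_le_of_le_two_mul hχ' hab hb0 hb1
  have hleast := Int.isLeast_toNat_ceil_intCast_div (b := b) (q := a - 1) (by omega)
  have hle_b := Int.toNat_ceil_intCast_div_le (q := a - 1) hb0 (by omega)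
  push_cast at hleast hle_b
  exact ⟨mem_admissibleShifts_of_le hab (by omega) hleast.1 hle_b,
    fun k hk => hleast.2 (le_mul_of_mem_admissibleShifts hab hb0 hb1 hk)⟩

/-- Let χ and χ' be integers with χ ≤ −2 and χ' ≤ 2χ, and write
−χ' = a·(−χ) + b with integers a, b satisfying 0 ≤ b < −χ (so a ≥ 2).  Then the least
natural number k for which there exists an integer d ≥ 1 with d(χ−k) ≤ χ'−k and dχ ≥ χ'+k
(equivalently, (χ'−k)/(χ−k) ≤ d ≤ (χ'+k)/χ as rational numbers) is k = ⌈b/(a−1)⌉. -/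
theorem least_k_eq_ceil (χ χ' a b : ℤ) (hχ : χ ≤ -2) (hχ' : χ' ≤ 2 * χ)
    (hab : -χ' = a * (-χ) + b) (hb0 : 0 ≤ b) (hb1 : b < -χ) :
    IsLeast {k : ℕ | ∃ d : ℤ, 1 ≤ d ∧ d * (χ - (k : ℤ)) ≤ χ' - (k : ℤ) ∧ χ' + (k : ℤ) ≤ d * χ}
      (⌈(b : ℚ) / ((a : ℚ) - 1)⌉.toNat) :=
  least_k_eq_ceil_general χ χ' a b hχ' hab hb0 hb1
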